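/- Let p ≥ 3 be a prime, let q, k ≥ 1 be natural numbers with |q|_p < |k|_p ≤ 1 and |q|_p < 1. Then for every a ∈ ℚ_p with |a − (1 − q)|_p < |q|_p², the equation x^k = a has exactly one solution x_* in 𝓔_p. -/

import Mathlib

/-!
For odd `p` and `‖s‖ < 1` the binomial theorem gives `‖(1 + s)^k - 1 - k s‖ ≤ ‖k‖ ‖s‖²`: writing
`C(k, j) = (k / j) C(k-1, j-1)`, the denominator `j` costs at most `p^(j-2) ≤ ‖s‖^(-(j-2))`.
Hence `‖x^k - y^k‖ = ‖k‖ ‖x - y‖` on `𝓔_p`, which gives uniqueness.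

For existence, the Newton step `1 + (a - 1)/k` from `1` is close enough to a root of `X^k - a` for
Hensel's lemma as soon as `‖k‖ ≥ 1/p`. For `k = p m` one first extracts a `p`-th root `w` of `a`;
the scaling identity gives `‖w - 1‖ < ‖m‖`, so induction on `k` applies.
-/

namespace Padic

variable {p : ℕ} [Fact p.Prime]

lemma norm_le_inv_of_norm_lt_one {x : ℚ_[p]} (h : ‖x‖ < 1) : ‖x‖ ≤ (p : ℝ)⁻¹ := by
  simpa using (norm_lt_pow_iff_norm_le_pow_sub_one x 0).mp (by simpa using h)

lemma norm_natCast_le_one (n : ℕ) : ‖(n : ℚ_[p])‖ ≤ 1 := mod_cast norm_int_le_one n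

lemma norm_eq_one_of_norm_sub_one_lt_one {x : ℚ_[p]} (h : ‖x - 1‖ < 1) : ‖x‖ = 1 := by
  simpa using norm_eq_of_norm_sub_lt_right (z2 := 1) (by simpa using h)

lemma inv_pow_sub_two_le_norm_natCast (hp : 3 ≤ p) {j : ℕ} (hj : 2 ≤ j) :
    (p : ℝ)⁻¹ ^ (j - 2) ≤ ‖(j : ℚ_[p])‖ := by
  have hlog : Nat.log p j < j - 1 := by
    refine Nat.log_lt_of_lt_pow (by omega) ?_
    calc j < 1 + (j - 1) * 2 := by omega
      _ ≤ 3 ^ (j - 1) := by exact_mod_cast one_add_mul_le_pow (a := (2 : ℤ)) (by norm_num) (j - 1)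
      _ ≤ p ^ (j - 1) := Nat.pow_le_pow_left hp _
  have hval : padicValNat p j ≤ j - 2 := by have := padicValNat_le_nat_log (p := p) j; omega
  rw [norm_eq_zpow_neg_valuation (mod_cast (by omega : j ≠ 0)), valuation_natCast, zpow_neg,
    zpow_natCast, ← inv_pow]
  exact pow_le_pow_of_le_one (by positivity)
    (inv_le_one_of_one_le₀ (mod_cast (Fact.out : p.Prime).one_le)) hval

lemma norm_pow_mul_choose_le (hp : 3 ≤ p) {k j : ℕ} (hj : 2 ≤ j) {s : ℚ_[p]} (hs : ‖s‖ < 1) :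
    ‖s ^ j * (k.choose j : ℚ_[p])‖ ≤ ‖(k : ℚ_[p])‖ * ‖s‖ ^ 2 := by
  have hchoose : ‖(k.choose j : ℚ_[p])‖ * ‖(j : ℚ_[p])‖ ≤ ‖(k : ℚ_[p])‖ := by
    obtain ⟨i, rfl⟩ : ∃ i, j = i + 1 := ⟨j - 1, by omega⟩
    cases k with
    | zero => simp
    | succ n =>
      rw [← norm_mul, ← Nat.cast_mul, ← Nat.add_one_mul_choose_eq, Nat.cast_mul, norm_mul]
      exact mul_le_of_le_one_right (norm_nonneg _) (norm_natCast_le_one _)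
  have hpow : ‖s‖ ^ (j - 2) ≤ ‖(j : ℚ_[p])‖ :=
    (pow_le_pow_left₀ (norm_nonneg s) (norm_le_inv_of_norm_lt_one hs) _).trans
      (inv_pow_sub_two_le_norm_natCast hp hj)
  calc ‖s ^ j * (k.choose j : ℚ_[p])‖ = ‖(k.choose j : ℚ_[p])‖ * ‖s‖ ^ (j - 2) * ‖s‖ ^ 2 := by
        rw [norm_mul, norm_pow, mul_comm, mul_assoc, ← pow_add, Nat.sub_add_cancel hj]
    _ ≤ ‖(k.choose j : ℚ_[p])‖ * ‖(j : ℚ_[p])‖ * ‖s‖ ^ 2 := by gcongr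
    _ ≤ ‖(k : ℚ_[p])‖ * ‖s‖ ^ 2 := by gcongr

lemma norm_one_add_pow_sub_one_sub_mul_le (hp : 3 ≤ p) (k : ℕ) {s : ℚ_[p]} (hs : ‖s‖ < 1) :
    ‖(1 + s) ^ k - 1 - k * s‖ ≤ ‖(k : ℚ_[p])‖ * ‖s‖ ^ 2 := by
  obtain rfl | hk := k.eq_zero_or_pos
  · simp
  have hexpand : (1 + s) ^ k - 1 - k * s =
      ∑ j ∈ Finset.Ico 2 (k + 1), s ^ j * (k.choose j : ℚ_[p]) := by
    rw [add_comm, add_pow, Finset.range_eq_Ico, Finset.sum_eq_sum_Ico_succ_bot (by omega),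
      Finset.sum_eq_sum_Ico_succ_bot (by omega)]
    simp only [pow_zero, tsub_zero, one_pow, mul_one, Nat.choose_zero_right, Nat.cast_one,
      zero_add, pow_one, Nat.choose_one_right, Nat.reduceAdd, add_sub_cancel_left]
    ring
  rw [hexpand]
  exact IsUltrametricDist.norm_sum_le_of_forall_le_of_nonneg (by positivity)
    fun j hj => norm_pow_mul_choose_le hp (Finset.mem_Ico.mp hj).1 hs

lemma norm_pow_sub_one_eq (hp : 3 ≤ p) (k : ℕ) {x : ℚ_[p]} (hx : ‖x - 1‖ < 1) :
    ‖x ^ k - 1‖ = ‖(k : ℚ_[p])‖ * ‖x - 1‖ := by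
  rcases eq_or_ne (k : ℚ_[p]) 0 with hk | hk
  · simp_all
  rcases eq_or_ne x 1 with rfl | hx1
  · simp
  have herr : ‖x ^ k - 1 - k * (x - 1)‖ < ‖(k : ℚ_[p]) * (x - 1)‖ :=
    calc ‖x ^ k - 1 - k * (x - 1)‖ ≤ ‖(k : ℚ_[p])‖ * ‖x - 1‖ ^ 2 := by
          simpa using norm_one_add_pow_sub_one_sub_mul_le hp k hx
      _ < ‖(k : ℚ_[p])‖ * ‖x - 1‖ := by
          gcongr
          exact pow_lt_self_of_lt_one₀ (norm_pos_iff.mpr (sub_ne_zero.mpr hx1)) hx one_lt_two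
      _ = ‖(k : ℚ_[p]) * (x - 1)‖ := (norm_mul _ _).symm
  rw [← norm_mul, ← sub_add_cancel (x ^ k - 1) (k * (x - 1)),
    IsUltrametricDist.norm_add_eq_max_of_norm_ne_norm herr.ne, max_eq_right herr.le]

lemma norm_pow_sub_pow_eq (hp : 3 ≤ p) (k : ℕ) {x y : ℚ_[p]} (hx : ‖x - 1‖ < 1)
    (hy : ‖y - 1‖ < 1) : ‖x ^ k - y ^ k‖ = ‖(k : ℚ_[p])‖ * ‖x - y‖ := by
  have hy1 : ‖y‖ = 1 := norm_eq_one_of_norm_sub_one_lt_one hy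
  have hy0 : y ≠ 0 := norm_ne_zero_iff.mp (by simp [hy1])
  have hxy : ‖x - y‖ < 1 := by
    simpa using (IsUltrametricDist.norm_add_le_max (x - 1) (1 - y)).trans_lt
      (max_lt hx (by rwa [norm_sub_rev]))
  have hquot : ‖x / y - 1‖ < 1 := by rwa [div_sub_one hy0, norm_div, hy1, div_one]
  calc ‖x ^ k - y ^ k‖ = ‖y ^ k * ((x / y) ^ k - 1)‖ := by
        rw [div_pow, mul_sub, mul_div_cancel₀ _ (pow_ne_zero _ hy0), mul_one]
    _ = ‖(k : ℚ_[p])‖ * ‖x - y‖ := by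
        rw [norm_mul, norm_pow, hy1, one_pow, one_mul, norm_pow_sub_one_eq hp k hquot,
          div_sub_one hy0, norm_div, hy1, div_one]

lemma pow_injOn (hp : 3 ≤ p) {k : ℕ} (hk : k ≠ 0) :
    Set.InjOn (· ^ k) {x : ℚ_[p] | ‖x - 1‖ < 1} := fun x hx y hy hxy => by
  have h := norm_pow_sub_pow_eq hp k hx hy
  simpa [show x ^ k = y ^ k from hxy, hk, sub_eq_zero, eq_comm] using h

lemma exists_pow_eq_of_norm_pow_sub_lt (k : ℕ) {a x₀ : ℚ_[p]} (hx₀ : ‖x₀ - 1‖ < 1)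
    (h : ‖x₀ ^ k - a‖ < ‖(k : ℚ_[p])‖ ^ 2) :
    ∃ z : ℚ_[p], z ^ k = a ∧ ‖z - x₀‖ < ‖(k : ℚ_[p])‖ := by
  have hx₀1 : ‖x₀‖ = 1 := norm_eq_one_of_norm_sub_one_lt_one hx₀
  have ha : ‖a‖ ≤ 1 := by
    have hk2 : ‖(k : ℚ_[p])‖ ^ 2 ≤ 1 := pow_le_one₀ (norm_nonneg _) (norm_natCast_le_one k)
    simpa [hx₀1] using IsUltrametricDist.norm_add_le_max (x₀ ^ k) (a - x₀ ^ k) |>.trans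
      (max_le (by simp [hx₀1]) (by rw [norm_sub_rev]; exact h.le.trans hk2))
  set A : ℤ_[p] := ⟨a, ha⟩
  set X₀ : ℤ_[p] := ⟨x₀, hx₀1.le⟩
  have hderiv : ‖(Polynomial.X ^ k - Polynomial.C A).derivative.aeval X₀‖ = ‖(k : ℚ_[p])‖ := by
    simp only [Polynomial.derivative_sub, Polynomial.derivative_C, sub_zero,
      Polynomial.derivative_X_pow, map_mul, map_pow, Polynomial.aeval_X, Polynomial.aeval_C,
      Algebra.algebraMap_self, RingHom.id_apply, norm_mul, norm_pow]
    rw [show ‖X₀‖ = 1 from hx₀1, one_pow, mul_one]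
    rfl
  have heval (z : ℤ_[p]) : (Polynomial.X ^ k - Polynomial.C A).aeval z = z ^ k - A := by
    simp only [map_sub, map_pow, Polynomial.aeval_X, Polynomial.aeval_C,
      Algebra.algebraMap_self, RingHom.id_apply]
  obtain ⟨z, hz, hzdist, -⟩ := hensels_lemma (F := Polynomial.X ^ k - Polynomial.C A) (a := X₀)
    (by rw [hderiv, heval]; exact h)
  rw [heval, sub_eq_zero] at hz
  exact ⟨z, congrArg Subtype.val hz, hderiv ▸ hzdist⟩

lemma exists_pow_eq_of_inv_le_norm (hp : 3 ≤ p) {k : ℕ} (hk : (p : ℝ)⁻¹ ≤ ‖(k : ℚ_[p])‖)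
    {a : ℚ_[p]} (ha : ‖a - 1‖ < ‖(k : ℚ_[p])‖) : ∃ x : ℚ_[p], ‖x - 1‖ < 1 ∧ x ^ k = a := by
  have hk0 : 0 < ‖(k : ℚ_[p])‖ := (norm_nonneg _).trans_lt ha
  set s := (a - 1) / k
  have hs : ‖s‖ < 1 := by rwa [norm_div, div_lt_one hk0]
  have hks : (k : ℚ_[p]) * s = a - 1 := mul_div_cancel₀ _ (norm_pos_iff.mp hk0)
  have hp1 : (p : ℝ)⁻¹ < 1 := inv_lt_one_of_one_lt₀ (mod_cast (Fact.out : p.Prime).one_lt)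
  have happrox : ‖(1 + s) ^ k - a‖ < ‖(k : ℚ_[p])‖ ^ 2 :=
    calc ‖(1 + s) ^ k - a‖ = ‖(1 + s) ^ k - 1 - k * s‖ := by rw [hks, sub_sub, add_sub_cancel]
      _ ≤ ‖(k : ℚ_[p])‖ * ‖s‖ ^ 2 := norm_one_add_pow_sub_one_sub_mul_le hp k hs
      _ ≤ ‖(k : ℚ_[p])‖ * (p : ℝ)⁻¹ ^ 2 := by gcongr; exact norm_le_inv_of_norm_lt_one hs
      _ < ‖(k : ℚ_[p])‖ * (p : ℝ)⁻¹ := by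
          gcongr; exact pow_lt_self_of_lt_one₀ (by positivity) hp1 one_lt_two
      _ ≤ ‖(k : ℚ_[p])‖ ^ 2 := by rw [sq]; gcongr
  obtain ⟨x, hxk, hx⟩ :=
    exists_pow_eq_of_norm_pow_sub_lt k (x₀ := 1 + s) (by simpa using hs) happrox
  refine ⟨x, ?_, hxk⟩
  calc ‖x - 1‖ = ‖(x - (1 + s)) + s‖ := by ring_nf
    _ ≤ max ‖x - (1 + s)‖ ‖s‖ := IsUltrametricDist.norm_add_le_max _ _
    _ < 1 := max_lt (hx.trans_le (norm_natCast_le_one k)) hs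

lemma exists_pow_eq_of_norm_sub_one_lt (hp : 3 ≤ p) (k : ℕ) {a : ℚ_[p]}
    (ha : ‖a - 1‖ < ‖(k : ℚ_[p])‖) : ∃ x : ℚ_[p], ‖x - 1‖ < 1 ∧ x ^ k = a := by
  induction k using Nat.strong_induction_on generalizing a with
  | _ k ih =>
  have hpp : p.Prime := Fact.out
  by_cases hpk : p ∣ k
  · obtain ⟨m, rfl⟩ := hpk
    have hkm : ‖((p * m : ℕ) : ℚ_[p])‖ = (p : ℝ)⁻¹ * ‖(m : ℚ_[p])‖ := by
      rw [Nat.cast_mul, norm_mul, norm_p]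
    obtain ⟨w, hw, rfl⟩ := exists_pow_eq_of_inv_le_norm hp (k := p) norm_p.ge <| ha.trans_le <| by
      rw [hkm, norm_p]; exact mul_le_of_le_one_right (by positivity) (norm_natCast_le_one m)
    have hm : ‖w - 1‖ < ‖(m : ℚ_[p])‖ := by
      rw [norm_pow_sub_one_eq hp p hw, hkm, norm_p] at ha
      exact lt_of_mul_lt_mul_left ha (by positivity)
    have hm0 : m ≠ 0 := by rintro rfl; exact (norm_nonneg _).not_gt (by simpa using hm)
    obtain ⟨x, hx, rfl⟩ := ih m (lt_mul_left (Nat.pos_of_ne_zero hm0) hpp.one_lt) hm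
    exact ⟨x, hx, by rw [← pow_mul, mul_comm]⟩
  · have hk1 : ‖(k : ℚ_[p])‖ = 1 :=
      norm_natCast_eq_one_iff.mpr ((Nat.Prime.coprime_iff_not_dvd hpp).mpr hpk)
    exact exists_pow_eq_of_inv_le_norm hp (hk1 ▸ inv_le_one_of_one_le₀ (mod_cast hpp.one_le)) ha

end Padic

theorem stmt12_general (p : ℕ) [Fact p.Prime] (hp : 3 ≤ p) (q k : ℕ) (hk : 1 ≤ k)
    (hqk : ‖(q : ℚ_[p])‖ < ‖(k : ℚ_[p])‖)
    (hq1 : ‖(q : ℚ_[p])‖ < 1)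
    (a : ℚ_[p]) (ha : ‖a - (1 - (q : ℚ_[p]))‖ < ‖(q : ℚ_[p])‖ ^ 2) :
    ∃! x : ℚ_[p], ‖x - 1‖ < 1 ∧ x ^ k = a := by
  have hq2 : ‖(q : ℚ_[p])‖ ^ 2 ≤ ‖(q : ℚ_[p])‖ :=
    pow_le_of_le_one (norm_nonneg _) hq1.le two_ne_zero
  have ha1 : ‖a - 1‖ < ‖(k : ℚ_[p])‖ :=
    calc ‖a - 1‖ = ‖(a - (1 - q)) + -(q : ℚ_[p])‖ := by congr 1; ring
      _ ≤ max ‖a - (1 - q)‖ ‖-(q : ℚ_[p])‖ := IsUltrametricDist.norm_add_le_max _ _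
      _ < ‖(k : ℚ_[p])‖ := max_lt ((ha.trans_le hq2).trans hqk) (by rwa [norm_neg])
  obtain ⟨x, hx, rfl⟩ := Padic.exists_pow_eq_of_norm_sub_one_lt hp k ha1
  exact ⟨x, ⟨hx, rfl⟩, fun y hy => Padic.pow_injOn hp (by omega) hy.1 hx hy.2⟩

theorem stmt12 (p : ℕ) [Fact p.Prime] (hp : 3 ≤ p) (q k : ℕ) (hq : 1 ≤ q) (hk : 1 ≤ k)
    (hqk : ‖(q : ℚ_[p])‖ < ‖(k : ℚ_[p])‖) (hk1 : ‖(k : ℚ_[p])‖ ≤ 1)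
    (hq1 : ‖(q : ℚ_[p])‖ < 1)
    (a : ℚ_[p]) (ha : ‖a - (1 - (q : ℚ_[p]))‖ < ‖(q : ℚ_[p])‖ ^ 2) :
    ∃! x : ℚ_[p], ‖x - 1‖ < 1 ∧ x ^ k = a :=
  stmt12_general p hp q k hk hqk hq1 a ha
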